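/- Let E be a subset of a closed orientable surface S with nonpositive Euler characteristic, and let fill(E) denote the union of E with all connected components of S \ E that are inessential (i.e., contained in a disjoint union of open topological disks). Then fill(fill(E)) = fill(E). -/
import Mathlib


open Set Topology Filter unitInterval

section Defs
variable {S : Type*} [TopologicalSpace S]

/-- An open set is inessential if every loop contained in it is null-homotopic in `S`. -/
def IsInessentialOpen (U : Set S) : Prop :=
  ∀ (x : S) (γ : Path x x), Set.range ⇑γ ⊆ U → Path.Homotopic γ (Path.refl x)

/-- A set is inessential if it has an inessential open neighborhood. -/
def Inessential (E : Set S) : Prop :=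
  ∃ V : Set S, IsOpen V ∧ E ⊆ V ∧ IsInessentialOpen V

/-- A set is fully essential if its complement is inessential. -/
def FullyEssential (E : Set S) : Prop := Inessential Eᶜ

/-- The filling of `E`: the union of `E` with all inessential connected components of `S \ E`. -/
def fillSet (E : Set S) : Set S :=
  E ∪ {x | x ∉ E ∧ Inessential (connectedComponentIn Eᶜ x)}

/-- `S` has genus `g`: the first homology (abelianized fundamental group) is `ℤ^{2g}`. -/
def HasGenus (S : Type*) [TopologicalSpace S] (g : ℕ) : Prop :=
  ∀ x : S, Nonempty (Abelianization (FundamentalGroup S x) ≃* Multiplicative (Fin (2*g) → ℤ))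

/-- `f` is homotopic to the identity. -/
def HomotopicToId (f : S ≃ₜ S) : Prop :=
  ContinuousMap.Homotopic ⟨⇑f, f.continuous⟩ (ContinuousMap.id S)

/-- `f` is isotopic to the identity (there is a continuous family of homeomorphisms joining
the identity to `f`); used as well to encode orientation preservation in the plane/disk case. -/
def IsotopicToId (f : S ≃ₜ S) : Prop :=
  ∃ F : C(↥unitInterval × S, S), (∀ t : ↥unitInterval, IsHomeomorph fun x => F (t, x)) ∧
    (∀ x, F (0, x) = x) ∧ (∀ x, F (1, x) = f x)

/-- `X` is wandering for `f`: all forward iterates of `X` are disjoint from `X`. -/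
def IsWandering (f : S → S) (X : Set S) : Prop := ∀ n : ℕ, 0 < n → f^[n] '' X ∩ X = ∅

/-- An open topological disk. -/
def IsOpenDisk (U : Set S) : Prop := IsOpen U ∧ Nonempty (↥U ≃ₜ (ℝ × ℝ))

/-- An open topological annulus. -/
def IsOpenAnnulus (A : Set S) : Prop :=
  IsOpen A ∧ Nonempty (↥A ≃ₜ (Circle × ↥(Set.Ioo (0:ℝ) 1)))

/-- The open part (interior of the parameter interval) of an arc. -/
def crossCore {a b : S} (sig : Path a b) : Set S := ⇑sig '' {t : ↥unitInterval | t ≠ 0 ∧ t ≠ 1}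

/-- `sig` is a cross-cut of the open disk `U`: a simple arc in `U` joining two boundary points,
such that each complementary component of it in `U` has more than one boundary point on `∂U`. -/
def IsCrossCut (U : Set S) {a b : S} (sig : Path a b) : Prop :=
  a ∈ frontier U ∧ b ∈ frontier U ∧
  (∀ t : ↥unitInterval, t ≠ 0 → t ≠ 1 → sig t ∈ U) ∧
  Set.InjOn ⇑sig {t : ↥unitInterval | t ≠ 0 ∧ t ≠ 1} ∧
  ∀ x ∈ U \ crossCore sig,
    (closure (connectedComponentIn (U \ crossCore sig) x) ∩ frontier U).Nontrivial

/-- `U` has no wandering cross-cuts. -/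
def HasNoWanderingCrossCut (f : S → S) (U : Set S) : Prop :=
  ∀ (a b : S) (sig : Path a b), IsCrossCut U sig → ¬ IsWandering f (crossCore sig)

/-- The full orbit `⋃_{n ∈ ℤ} fⁿ(U)`. -/
def fullOrbit (f : S ≃ₜ S) (U : Set S) : Set S := ⋃ n : ℤ, ⇑(f.toEquiv ^ n) '' U

/-- Dynamically inessential points. -/
def Ine (f : S ≃ₜ S) : Set S :=
  {x | ∃ U : Set S, IsOpen U ∧ x ∈ U ∧ Inessential (fullOrbit f U)}

/-- Dynamically essential points. -/
def Ess (f : S ≃ₜ S) : Set S := (Ine f)ᶜ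

/-- Dynamically fully essential points `𝒞(f)`. -/
def fullyEssentialPts (f : S ≃ₜ S) : Set S :=
  {x | ∀ U : Set S, IsOpen U → x ∈ U → FullyEssential (fullOrbit f U)}

/-- `f` is nonwandering. -/
def IsNonWandering (f : S → S) : Prop :=
  ∀ U : Set S, IsOpen U → U.Nonempty → ∃ n : ℕ, 0 < n ∧ (f^[n] '' U ∩ U).Nonempty

end Defs

section Cover
variable {Shat S : Type*} [TopologicalSpace Shat] [TopologicalSpace S]

/-- `T` is a deck transformation of the covering `π`. -/
def IsDeck (π : Shat → S) (T : Shat ≃ₜ Shat) : Prop := ∀ z, π (T z) = π z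

/-- `fhat` is a natural lift of `f`: it is a lift commuting with all deck transformations. -/
def IsNaturalLift (π : Shat → S) (f : S ≃ₜ S) (fhat : Shat ≃ₜ Shat) : Prop :=
  (∀ z, π (fhat z) = f (π z)) ∧ ∀ T : Shat ≃ₜ Shat, IsDeck π T → ∀ z, fhat (T z) = T (fhat z)

end Cover

section Metric
variable {S : Type*} [PseudoEMetricSpace S]

/-- Length of a path (its total variation). -/
noncomputable def pathLength {x y : S} (γ : Path x y) : ENNReal := eVariationOn ⇑γ Set.univ

/-- Covering distance in `W`: infimum of lengths of arcs in `S` joining `x` to `y` that are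
homotopic with fixed endpoints (in `S`) to an arc contained in `W`. -/
noncomputable def coveringDist (W : Set S) (x y : S) : ENNReal :=
  ⨅ (γ : Path x y) (_ : ∃ sig : Path x y, Set.range ⇑sig ⊆ W ∧ γ.Homotopic sig), pathLength γ

/-- Covering diameter of `W`; `W` is homotopically bounded when this is finite. -/
noncomputable def coveringDiam (W : Set S) : ENNReal :=
  ⨆ x ∈ W, ⨆ y ∈ W, coveringDist W x y

end Metric

section Traj
variable {S : Type*} [TopologicalSpace S]

/-- The `n`-step trajectory arc, obtained by concatenating isotopy trajectory arcs. -/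
noncomputable def trajN (f : S ≃ₜ S) (traj : ∀ x : S, Path x (f x)) :
    ∀ (x : S) (n : ℕ), Path x ((⇑f)^[n] x)
  | x, 0 => (Path.refl x).cast rfl (by simp)
  | x, n+1 => ((traj x).trans (trajN f traj (f x) n)).cast rfl
      (by rw [Function.iterate_succ_apply])

/-- The homological displacement `Φ_f^n(x)`: the class of the loop
`γ_x * ℐ_x^n * γ_{fⁿ(x)}⁻¹`. -/
noncomputable def homDisp {S V : Type*} [TopologicalSpace S] (f : S ≃ₜ S)
    (traj : ∀ x : S, Path x (f x)) {b : S} (γA : ∀ x : S, Path b x)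
    (h : Path b b → V) (x : S) (n : ℕ) : V :=
  h ((γA x).trans ((trajN f traj x n).trans (γA ((⇑f)^[n] x)).symm))

end Traj

/-- On a closed orientable surface with nonpositive Euler characteristic
(i.e. genus ≥ 1), the filling operation is idempotent: `fill(fill E) = fill E`. -/
theorem fillSet_idem {S : Type*} [TopologicalSpace S] [CompactSpace S] [ConnectedSpace S]
    [T2Space S] [ChartedSpace (EuclideanSpace ℝ (Fin 2)) S]
    (hgenus : ∃ g : ℕ, 1 ≤ g ∧ HasGenus S g)
    (E : Set S) : fillSet (fillSet E) = fillSet E := by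
  apply subset_antisymm
  · rintro x (hx | ⟨hx, W, hWopen, hWsub, hWin⟩)
    · exact hx
    · -- x ∉ fillSet E, yet component of (fillSet E)ᶜ at x is inessential: contradiction.
      exfalso
      have hxE : x ∉ E := fun h => hx (Or.inl h)
      have hxness : ¬ Inessential (connectedComponentIn Eᶜ x) := fun h => hx (Or.inr ⟨hxE, h⟩)
      -- the component C of Eᶜ at x avoids fillSet E
      have hCsub : connectedComponentIn Eᶜ x ⊆ (fillSet E)ᶜ := by
        intro y hy
        intro hyf
        rcases hyf with hyE | ⟨hyE, hyin⟩
        · exact (connectedComponentIn_subset Eᶜ x hy) hyE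
        · rw [← connectedComponentIn_eq hy] at hyin
          exact hxness hyin
      have hxc : x ∈ connectedComponentIn Eᶜ x := mem_connectedComponentIn hxE
      have hsub2 : connectedComponentIn Eᶜ x ⊆ connectedComponentIn (fillSet E)ᶜ x :=
        (isPreconnected_connectedComponentIn).subset_connectedComponentIn hxc hCsub
      exact hxness ⟨W, hWopen, hsub2.trans hWsub, hWin⟩
  · exact Set.subset_union_left
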